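/- For every T > 0, every θ ∈ (0, 1/2] and every δ ∈ (0, 1] there exists a constant C > 0 such that for every n ∈ ℤ³, every N ∈ ℕ and every τ ∈ [0, T]: | ∑_{n₂ ∈ ℤ³ : ⟨n⟩ ≤ ⟨n₂⟩^θ and |n₂| ≤ N} sin(τ(⟨n + n₂⟩ − ⟨n₂⟩)) / (⟨n + n₂⟩ ⟨n₂⟩²) | ≤ C ⟨n⟩^δ. In particular, although the sum is not absolutely convergent as N → ∞, its truncations are bounded uniformly in N. -/

import Mathlib

open scoped Classical

/-- Japanese bracket of a lattice point `n ∈ ℤ³`: `⟨n⟩ = (1 + |n|²)^{1/2}`. -/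
noncomputable def jb (n : Fin 3 → ℤ) : ℝ :=
  Real.sqrt (1 + ∑ i, ((n i : ℝ)) ^ 2)

/-- Euclidean norm of a lattice point `n ∈ ℤ³`. -/
noncomputable def enorm' (n : Fin 3 → ℤ) : ℝ :=
  Real.sqrt (∑ i, ((n i : ℝ)) ^ 2)

/-!
The region of summation is invariant under `n₂ ↦ -n₂`, so the sum is half the sum of the pairs
`f n₂ + f (-n₂)` of summands. Write `M = ⟨n₂⟩`, `A = ⟨n + n₂⟩`, `B = ⟨n - n₂⟩`, `p = n · n₂` and
`e = |n|²`, so that `A² = M² + 2p + e` and `B² = M² - 2p + e`. The first-order terms `±p/M` cancel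
in `A + B - 2M = O(e/M)`, while `|A - B| = O(|p|/M) = O(⟨n⟩)`. Together with
`|sin a + sin b| ≤ |a + b|` this bounds each pair by `O((1 + T) ⟨n⟩² / ⟨n₂⟩⁴)`. On the region
`⟨n⟩² ≤ ⟨n₂⟩` that is at most `⟨n⟩^δ ⟨n₂⟩^(-(3 + δ/2))`, whose sum over a box is bounded
independently of its size by comparison with `∏ᵢ (1 + n₂ᵢ²)^(-(3 + δ/2)/6)`.
-/

lemma abs_sum_le_half_sum_of_neg_mem {G : Type*} [InvolutiveNeg G] {s : Finset G}
    (hs : ∀ x ∈ s, -x ∈ s) {f g : G → ℝ} (h : ∀ x ∈ s, |f x + f (-x)| ≤ g x) :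
    |∑ x ∈ s, f x| ≤ (∑ x ∈ s, g x) / 2 := by
  have hflip : ∑ x ∈ s, f (-x) = ∑ x ∈ s, f x :=
    Finset.sum_nbij' Neg.neg Neg.neg hs hs (by simp) (by simp) (by simp)
  calc |∑ x ∈ s, f x| = |∑ x ∈ s, (f x + f (-x))| / 2 := by
        rw [Finset.sum_add_distrib, hflip, ← two_mul, abs_mul, abs_two]
        ring
    _ ≤ (∑ x ∈ s, g x) / 2 := by
        gcongr
        exact (Finset.abs_sum_le_sum_abs _ _).trans (Finset.sum_le_sum h)

lemma neg_mem_Icc_neg {α : Type*} [AddCommGroup α] [PartialOrder α] [IsOrderedAddMonoid α]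
    [LocallyFiniteOrder α] {a x : α} (hx : x ∈ Finset.Icc (-a) a) : -x ∈ Finset.Icc (-a) a := by
  rw [Finset.mem_Icc] at hx ⊢
  exact ⟨neg_le_neg hx.2, neg_le.1 hx.1⟩

lemma Real.abs_sin_add_sin_le (x y : ℝ) : |Real.sin x + Real.sin y| ≤ |x + y| := by
  simpa [sub_neg_eq_add] using Real.abs_sin_sub_sin_le x (-y)

section SymmetricExpansion

variable {A B M p e : ℝ}

lemma le_add_of_sq_eq (hA0 : 0 ≤ A) (hB0 : 0 ≤ B) (he : 0 ≤ e)
    (hA : A ^ 2 = M ^ 2 + 2 * p + e) (hB : B ^ 2 = M ^ 2 - 2 * p + e) : M ≤ A + B := by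
  nlinarith [mul_nonneg hA0 hB0]

lemma sub_eq_div_of_sq_eq (hA0 : 0 ≤ A) (hB0 : 0 ≤ B) (he : 0 ≤ e) (hM : 0 < M)
    (hA : A ^ 2 = M ^ 2 + 2 * p + e) (hB : B ^ 2 = M ^ 2 - 2 * p + e) :
    B - A = -(4 * p) / (A + B) := by
  have := le_add_of_sq_eq hA0 hB0 he hA hB
  rw [eq_div_iff (by linarith)]
  linear_combination hB - hA

lemma abs_sub_le_of_sq_eq (hA0 : 0 ≤ A) (hB0 : 0 ≤ B) (he : 0 ≤ e) (hM : 0 < M)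
    (hA : A ^ 2 = M ^ 2 + 2 * p + e) (hB : B ^ 2 = M ^ 2 - 2 * p + e) :
    |A - B| ≤ 4 * |p| / M := by
  have hsum := le_add_of_sq_eq hA0 hB0 he hA hB
  rw [abs_sub_comm, sub_eq_div_of_sq_eq hA0 hB0 he hM hA hB, abs_div, abs_neg, abs_mul,
    abs_of_pos (by linarith : 0 < A + B), abs_of_pos (by norm_num : (0:ℝ) < 4)]
  gcongr

lemma abs_add_sub_two_mul_le (hA0 : 0 ≤ A) (hB0 : 0 ≤ B) (he : 0 ≤ e) (hM : 0 < M)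
    (hA : A ^ 2 = M ^ 2 + 2 * p + e) (hB : B ^ 2 = M ^ 2 - 2 * p + e) (hp : p ^ 2 ≤ e * M ^ 2) :
    |A + B - 2 * M| ≤ 8 * e / M := by
  have hsum := le_add_of_sq_eq hA0 hB0 he hA hB
  have hAM : 0 < A + M := by linarith
  have hBM : 0 < B + M := by linarith
  have hdiff := sub_eq_div_of_sq_eq hA0 hB0 he hM hA hB
  have hexp : A + B - 2 * M
      = e / (A + M) + e / (B + M) - 8 * p ^ 2 / ((A + B) * (A + M) * (B + M)) := by
    have hA' : A - M = (2 * p + e) / (A + M) := by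
      rw [eq_div_iff hAM.ne']; linear_combination hA
    have hB' : B - M = (e - 2 * p) / (B + M) := by
      rw [eq_div_iff hBM.ne']; linear_combination hB
    have hcross : 2 * p / (A + M) - 2 * p / (B + M)
        = -(8 * p ^ 2) / ((A + B) * (A + M) * (B + M)) := by
      rw [div_sub_div _ _ hAM.ne' hBM.ne', show 2 * p * (B + M) - (A + M) * (2 * p)
        = 2 * p * (B - A) by ring, hdiff]
      field_simp
      ring
    linear_combination hA' + hB' + hcross
  have hfst : e / (A + M) + e / (B + M) ≤ 2 * (e / M) := by
    rw [two_mul]; gcongr <;> linarith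
  have hsnd : 8 * p ^ 2 / ((A + B) * (A + M) * (B + M)) ≤ 8 * (e / M) :=
    calc 8 * p ^ 2 / ((A + B) * (A + M) * (B + M)) ≤ 8 * (e * M ^ 2) / (M * M * M) := by
          gcongr <;> linarith
      _ = 8 * (e / M) := by field_simp
  rw [hexp, abs_le, mul_div_assoc]
  constructor
  · linarith [div_nonneg he hAM.le, div_nonneg he hBM.le]
  · have : 0 ≤ 8 * p ^ 2 / ((A + B) * (A + M) * (B + M)) := by positivity
    have : 0 ≤ e / M := div_nonneg he hM.le
    linarith

lemma abs_sin_add_sin_le_of_sq_eq {τ : ℝ} (hτ : 0 ≤ τ) (hA0 : 0 ≤ A) (hB0 : 0 ≤ B) (he : 0 ≤ e)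
    (hM : 0 < M) (hA : A ^ 2 = M ^ 2 + 2 * p + e) (hB : B ^ 2 = M ^ 2 - 2 * p + e)
    (hp : p ^ 2 ≤ e * M ^ 2) :
    |Real.sin (τ * (A - M)) + Real.sin (τ * (B - M))| ≤ τ * (8 * e / M) :=
  calc _ ≤ |τ * (A - M) + τ * (B - M)| := Real.abs_sin_add_sin_le _ _
    _ = τ * |A + B - 2 * M| := by
      rw [show τ * (A - M) + τ * (B - M) = τ * (A + B - 2 * M) by ring, abs_mul, abs_of_nonneg hτ]
    _ ≤ τ * (8 * e / M) := by
      gcongr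
      exact abs_add_sub_two_mul_le hA0 hB0 he hM hA hB hp

lemma div_eight_le_of_sq_eq {j : ℝ} (hA1 : 1 ≤ A) (he : 0 ≤ e) (hj : j ^ 2 ≤ M)
    (hp : |p| ≤ j * M) (hA : A ^ 2 = M ^ 2 + 2 * p + e) : M / 8 ≤ A := by
  rcases le_or_gt M 8 with hM | hM
  · linarith
  · have hj' : j ≤ 3 * M / 8 := by nlinarith
    have : M ^ 2 / 4 ≤ A ^ 2 := by
      nlinarith [neg_abs_le p, mul_le_mul_of_nonneg_right hj' (by linarith : (0:ℝ) ≤ M)]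
    nlinarith

lemma abs_sin_div_add_sin_div_le {T τ j : ℝ} (hτ0 : 0 ≤ τ) (hτT : τ ≤ T)
    (hA1 : 1 ≤ A) (hB1 : 1 ≤ B) (hj1 : 1 ≤ j) (he : 0 ≤ e)
    (hA : A ^ 2 = M ^ 2 + 2 * p + e) (hB : B ^ 2 = M ^ 2 - 2 * p + e)
    (hp : p ^ 2 ≤ e * M ^ 2) (hej : e ≤ j ^ 2) (hjM : j ^ 2 ≤ M) :
    |Real.sin (τ * (A - M)) / (A * M ^ 2) + Real.sin (τ * (B - M)) / (B * M ^ 2)|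
      ≤ (64 * T + 256) * (j ^ 2 / M ^ 4) := by
  have hM : 0 < M := by nlinarith
  have hT : 0 ≤ T := hτ0.trans hτT
  have hpj : |p| ≤ j * M :=
    abs_le_of_sq_le_sq (by nlinarith [mul_le_mul_of_nonneg_right hej (sq_nonneg M)]) (by positivity)
  have hA8 : M / 8 ≤ A := div_eight_le_of_sq_eq hA1 he hjM hpj hA
  have hB8 : M / 8 ≤ B :=
    div_eight_le_of_sq_eq hB1 he hjM (by rwa [abs_neg]) (by rw [hB]; ring)
  have hsin : |Real.sin (τ * (A - M)) + Real.sin (τ * (B - M))| ≤ T * (8 * j ^ 2 / M) :=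
    (abs_sin_add_sin_le_of_sq_eq hτ0 (by linarith) (by linarith) he hM hA hB hp).trans
      (by gcongr)
  set a := τ * (A - M)
  set b := τ * (B - M)
  have hdiff : |A - B| ≤ 4 * j :=
    calc |A - B| ≤ 4 * |p| / M := abs_sub_le_of_sq_eq (by linarith) (by linarith) he hM hA hB
      _ ≤ 4 * (j * M) / M := by gcongr
      _ = 4 * j := by field_simp
  have hsplit : Real.sin a / (A * M ^ 2) + Real.sin b / (B * M ^ 2)
      = (Real.sin a + Real.sin b) / (A * M ^ 2) + Real.sin b * ((A - B) / (A * B * M ^ 2)) := by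
    field_simp
    ring
  calc |Real.sin a / (A * M ^ 2) + Real.sin b / (B * M ^ 2)|
      ≤ |Real.sin a + Real.sin b| / (A * M ^ 2) + |Real.sin b| * (|A - B| / (A * B * M ^ 2)) := by
        rw [hsplit]
        refine (abs_add_le _ _).trans_eq ?_
        simp only [abs_div, abs_mul, abs_of_pos (by linarith : 0 < A),
          abs_of_pos (by linarith : 0 < B), abs_of_pos (pow_pos hM 2)]
    _ ≤ T * (8 * j ^ 2 / M) / (M / 8 * M ^ 2) + 1 * (4 * j / (M / 8 * (M / 8) * M ^ 2)) := by
        gcongr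
        exact Real.abs_sin_le_one b
    _ = (64 * T * j ^ 2 + 256 * j) / M ^ 4 := by
        field_simp
        ring
    _ ≤ (64 * T + 256) * (j ^ 2 / M ^ 4) := by
        rw [mul_div_assoc']
        gcongr
        nlinarith

end SymmetricExpansion

lemma sq_le_of_le_rpow {θ x y : ℝ} (hθ : θ ≤ 1 / 2) (hx : 0 ≤ x) (hy : 1 ≤ y)
    (h : x ≤ y ^ θ) : x ^ 2 ≤ y := by
  have : x ≤ √y := by
    rw [Real.sqrt_eq_rpow]
    exact h.trans (Real.rpow_le_rpow_of_exponent_le hy hθ)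
  exact (Real.le_sqrt hx (by linarith)).1 this

lemma sq_div_pow_four_le {j M δ : ℝ} (hj : 0 < j) (hjM : j ^ 2 ≤ M) (hδ : δ ≤ 2) :
    j ^ 2 / M ^ 4 ≤ j ^ δ * M ^ (-(3 + δ / 2)) := by
  have hM : 0 < M := (pow_pos hj 2).trans_le hjM
  have hsmall : (j ^ 2) ^ (1 - δ / 2) / M ^ (1 - δ / 2) ≤ 1 :=
    div_le_one_of_le₀ (Real.rpow_le_rpow (by positivity) hjM (by linarith)) (by positivity)
  have hjsplit : j ^ δ * (j ^ 2) ^ (1 - δ / 2) = j ^ 2 := by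
    rw [← Real.rpow_natCast j 2, ← Real.rpow_mul hj.le, ← Real.rpow_add hj]
    congr 1; push_cast; ring
  have hMsplit : M ^ (3 + δ / 2) * M ^ (1 - δ / 2) = M ^ 4 := by
    rw [← Real.rpow_add hM, ← Real.rpow_natCast]
    congr 1; push_cast; ring
  calc j ^ 2 / M ^ 4 = j ^ δ / M ^ (3 + δ / 2) * ((j ^ 2) ^ (1 - δ / 2) / M ^ (1 - δ / 2)) := by
        rw [← mul_div_mul_comm, hjsplit, hMsplit]
    _ ≤ j ^ δ / M ^ (3 + δ / 2) := mul_le_of_le_one_right (by positivity) hsmall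
    _ = j ^ δ * M ^ (-(3 + δ / 2)) := by rw [Real.rpow_neg hM.le, div_eq_mul_inv]

lemma summable_one_add_sq_rpow_neg {q : ℝ} (hq : 1 / 2 < q) :
    Summable fun k : ℤ => (1 + (k : ℝ) ^ 2) ^ (-q) := by
  refine (Real.summable_abs_int_rpow (b := 2 * q) (by linarith)).of_norm_bounded_eventually ?_
  filter_upwards [Filter.eventually_cofinite_ne 0] with k hk
  have hk2 : 0 < (k : ℝ) ^ 2 := by positivity
  calc ‖(1 + (k : ℝ) ^ 2) ^ (-q)‖ = (1 + (k : ℝ) ^ 2) ^ (-q) :=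
        Real.norm_of_nonneg (by positivity)
    _ ≤ ((k : ℝ) ^ 2) ^ (-q) := Real.rpow_le_rpow_of_nonpos hk2 (by linarith) (by linarith)
    _ = |(k : ℝ)| ^ (-(2 * q)) := by
        rw [← sq_abs, ← Real.rpow_natCast, ← Real.rpow_mul (abs_nonneg _)]
        push_cast
        ring_nf

lemma jb_sq (n : Fin 3 → ℤ) : jb n ^ 2 = 1 + ∑ i, (n i : ℝ) ^ 2 :=
  Real.sq_sqrt (by positivity)

lemma one_le_jb (n : Fin 3 → ℤ) : 1 ≤ jb n :=
  Real.one_le_sqrt.2 (le_add_of_nonneg_right (by positivity))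

lemma jb_pos (n : Fin 3 → ℤ) : 0 < jb n := one_pos.trans_le (one_le_jb n)

@[simp]
lemma jb_neg (n : Fin 3 → ℤ) : jb (-n) = jb n := by simp [jb]

@[simp]
lemma enorm'_neg (n : Fin 3 → ℤ) : enorm' (-n) = enorm' n := by simp [enorm']

lemma sum_sq_le_jb_sq (n : Fin 3 → ℤ) : ∑ i, (n i : ℝ) ^ 2 ≤ jb n ^ 2 := by
  rw [jb_sq]; linarith

lemma jb_add_sq (n m : Fin 3 → ℤ) :
    jb (n + m) ^ 2 = jb m ^ 2 + 2 * ∑ i, (n i : ℝ) * m i + ∑ i, (n i : ℝ) ^ 2 := by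
  simp only [jb_sq, Pi.add_apply, Int.cast_add, Finset.mul_sum, add_assoc,
    ← Finset.sum_add_distrib]
  congr 1
  exact Finset.sum_congr rfl fun i _ => by ring

lemma sq_sum_mul_le_mul_jb_sq (n m : Fin 3 → ℤ) :
    (∑ i, (n i : ℝ) * m i) ^ 2 ≤ (∑ i, (n i : ℝ) ^ 2) * jb m ^ 2 :=
  (Finset.sum_mul_sq_le_sq_mul_sq _ _ _).trans (by gcongr; exact sum_sq_le_jb_sq m)

lemma abs_sin_div_jb_add_sin_div_jb_neg_le {T τ : ℝ} (hτ0 : 0 ≤ τ) (hτT : τ ≤ T)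
    {n n₂ : Fin 3 → ℤ} (hn : jb n ^ 2 ≤ jb n₂) :
    |Real.sin (τ * (jb (n + n₂) - jb n₂)) / (jb (n + n₂) * jb n₂ ^ 2)
      + Real.sin (τ * (jb (n + -n₂) - jb (-n₂))) / (jb (n + -n₂) * jb (-n₂) ^ 2)|
      ≤ (64 * T + 256) * (jb n ^ 2 / jb n₂ ^ 4) := by
  have hminus : jb (n + -n₂) ^ 2
      = jb n₂ ^ 2 - 2 * ∑ i, (n i : ℝ) * n₂ i + ∑ i, (n i : ℝ) ^ 2 := by
    simp [jb_add_sq, Finset.sum_neg_distrib, sub_eq_add_neg]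
  rw [jb_neg]
  exact abs_sin_div_add_sin_div_le hτ0 hτT (one_le_jb _) (one_le_jb _) (one_le_jb n)
    (by positivity) (jb_add_sq n n₂) hminus (sq_sum_mul_le_mul_jb_sq n n₂)
    (sum_sq_le_jb_sq n) hn

lemma jb_rpow_neg_le_prod {q : ℝ} (hq : 0 ≤ q) (n : Fin 3 → ℤ) :
    jb n ^ (-(6 * q)) ≤ ∏ i, (1 + (n i : ℝ) ^ 2) ^ (-q) := by
  have hprod : ∏ i, (1 + (n i : ℝ) ^ 2) ≤ jb n ^ (6 : ℝ) :=
    calc ∏ i, (1 + (n i : ℝ) ^ 2) ≤ ∏ _i : Fin 3, jb n ^ 2 := by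
          gcongr with i
          rw [jb_sq]
          gcongr
          exact Finset.single_le_sum (f := fun j => (n j : ℝ) ^ 2) (fun j _ => sq_nonneg _)
            (Finset.mem_univ i)
      _ = jb n ^ (6 : ℝ) := by norm_num [← pow_mul]
  rw [Real.finsetProd_rpow _ _ (fun i _ => by positivity), neg_mul_eq_mul_neg,
    Real.rpow_mul (jb_pos n).le]
  exact Real.rpow_le_rpow_of_nonpos (by positivity) hprod (by linarith)

lemma exists_sum_Icc_jb_rpow_neg_le {s : ℝ} (hs : 3 < s) :
    ∃ K > 0, ∀ N : ℕ,
      ∑ x ∈ Finset.Icc (fun _ => -(N : ℤ)) (fun _ => (N : ℤ)), jb x ^ (-s) ≤ K := by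
  set u : ℤ → ℝ := fun k => (1 + (k : ℝ) ^ 2) ^ (-(s / 6))
  have hu : Summable u := summable_one_add_sq_rpow_neg (by linarith)
  have hu0 : ∀ k, 0 ≤ u k := fun k => by positivity
  have hS : 1 ≤ ∑' k, u k := by
    simpa [u] using hu.le_tsum 0 fun k _ => hu0 k
  refine ⟨(∑' k, u k) ^ 3, pow_pos (by linarith) 3, fun N => ?_⟩
  calc ∑ x ∈ Finset.Icc (fun _ => -(N : ℤ)) (fun _ => (N : ℤ)), jb x ^ (-s)
      ≤ ∑ x ∈ Fintype.piFinset fun _ : Fin 3 => Finset.Icc (-(N : ℤ)) N, ∏ i, u (x i) := by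
        rw [← Pi.Icc_eq]
        gcongr with x
        simpa [u, mul_div_cancel₀] using jb_rpow_neg_le_prod (q := s / 6) (by linarith) x
    _ = (∑ k ∈ Finset.Icc (-(N : ℤ)) N, u k) ^ 3 := by
        rw [← Finset.prod_univ_sum, Finset.prod_const, Finset.card_univ, Fintype.card_fin]
    _ ≤ (∑' k, u k) ^ 3 := by
        gcongr
        exact hu.sum_le_tsum _ fun k _ => hu0 k

theorem truncated_oscillatory_sum_uniform_bound_general
    (T : ℝ) (hT : 0 < T) (θ δ : ℝ)
    (hθ : θ ≤ 1 / 2) (hδ0 : 0 < δ) (hδ1 : δ ≤ 1) :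
    ∃ C : ℝ, 0 < C ∧ ∀ (n : Fin 3 → ℤ) (N : ℕ) (τ : ℝ), τ ∈ Set.Icc 0 T →
      |∑ n₂ ∈ (Finset.Icc (fun _ => -(N : ℤ)) (fun _ => (N : ℤ))).filter
            (fun n₂ => jb n ≤ jb n₂ ^ θ ∧ enorm' n₂ ≤ (N : ℝ)),
          Real.sin (τ * (jb (n + n₂) - jb n₂)) / (jb (n + n₂) * jb n₂ ^ 2)|
        ≤ C * jb n ^ δ := by
  obtain ⟨K, hK0, hK⟩ := exists_sum_Icc_jb_rpow_neg_le (s := 3 + δ / 2) (by linarith)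
  refine ⟨(32 * T + 128) * K, by positivity, fun n N τ ⟨hτ0, hτT⟩ => ?_⟩
  set S := (Finset.Icc (fun _ => -(N : ℤ)) (fun _ => (N : ℤ))).filter
    (fun n₂ => jb n ≤ jb n₂ ^ θ ∧ enorm' n₂ ≤ (N : ℝ))
  have hSn : ∀ x ∈ S, jb n ^ 2 ≤ jb x := fun x hx =>
    sq_le_of_le_rpow hθ (jb_pos n).le (one_le_jb x) (Finset.mem_filter.1 hx).2.1
  have hSneg : ∀ x ∈ S, -x ∈ S := fun x hx => by
    simp only [S, Finset.mem_filter, jb_neg, enorm'_neg] at hx ⊢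
    exact ⟨neg_mem_Icc_neg hx.1, hx.2⟩
  calc _ ≤ (∑ x ∈ S, (64 * T + 256) * (jb n ^ δ * jb x ^ (-(3 + δ / 2)))) / 2 :=
        abs_sum_le_half_sum_of_neg_mem hSneg fun x hx =>
          (abs_sin_div_jb_add_sin_div_jb_neg_le hτ0 hτT (hSn x hx)).trans
            (by gcongr; exact sq_div_pow_four_le (jb_pos n) (hSn x hx) (by linarith))
    _ ≤ (64 * T + 256) * (jb n ^ δ * K) / 2 := by
        rw [← Finset.mul_sum, ← Finset.mul_sum]
        gcongr
        · exact (Real.rpow_pos_of_pos (jb_pos n) δ).le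
        · exact (Finset.sum_le_sum_of_subset_of_nonneg (Finset.filter_subset _ _)
            fun x _ _ => (Real.rpow_pos_of_pos (jb_pos x) _).le).trans (hK N)
    _ = (32 * T + 128) * K * jb n ^ δ := by ring

theorem truncated_oscillatory_sum_uniform_bound
    (T : ℝ) (hT : 0 < T) (θ δ : ℝ)
    (hθ0 : 0 < θ) (hθ : θ ≤ 1 / 2) (hδ0 : 0 < δ) (hδ1 : δ ≤ 1) :
    ∃ C : ℝ, 0 < C ∧ ∀ (n : Fin 3 → ℤ) (N : ℕ) (τ : ℝ), τ ∈ Set.Icc 0 T →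
      |∑ n₂ ∈ (Finset.Icc (fun _ => -(N : ℤ)) (fun _ => (N : ℤ))).filter
            (fun n₂ => jb n ≤ jb n₂ ^ θ ∧ enorm' n₂ ≤ (N : ℝ)),
          Real.sin (τ * (jb (n + n₂) - jb n₂)) / (jb (n + n₂) * jb n₂ ^ 2)|
        ≤ C * jb n ^ δ :=
  truncated_oscillatory_sum_uniform_bound_general T hT θ δ hθ hδ0 hδ1
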